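/- Let M be the rotation of ℝ² by the angle 2π/3, i.e., the matrix [[−1/2, −√3/2],[√3/2, −1/2]]. Let f : ℝ² → ℝ be twice differentiable at 0 and satisfy f(Mx) = f(x) for all x ∈ ℝ². Then the derivative of f at 0 is zero, and there exists a ∈ ℝ such that f(x) = f(0) + a·‖x‖² + o(‖x‖²) as x → 0 (equivalently, the second derivative of f at 0 is a scalar multiple of the identity quadratic form). -/

import Mathlib

/-!
Differentiating `f ∘ R = f` at the fixed point `0` shows that `Df(0)` and `D²f(0)` are
`R`-invariant. Since `1 + R + R² = 0`, an `R`-invariant linear form `φ` satisfies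
`3 φ = φ ∘ (1 + R + R²) = 0`. An `R`-invariant symmetric bilinear form on `ℝ²` is a multiple of
the inner product: its invariance at `(e₀, e₀)` and `(e₀, e₁)` gives two linear equations in its
three entries. The second-order Taylor expansion `f x = f 0 + ½ D²f(0)(x, x) + o(‖x‖²)` then
gives the claim with `a = D²f(0)(e₀, e₀) / 2`.
-/

open Asymptotics

/-- Rotation of the Euclidean plane by the angle `2π/3`. -/
noncomputable def rot : EuclideanSpace ℝ (Fin 2) → EuclideanSpace ℝ (Fin 2) :=
  fun x => (WithLp.equiv 2 (Fin 2 → ℝ)).symm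
    ![(-1 / 2) * x 0 - (Real.sqrt 3 / 2) * x 1,
      (Real.sqrt 3 / 2) * x 0 - (1 / 2) * x 1]

open Filter Topology

section Calculus

variable {E F : Type*} [NormedAddCommGroup E] [NormedSpace ℝ E]
  [NormedAddCommGroup F] [NormedSpace ℝ F] {f : E → F}

theorem isLittleO_sub_sq_of_isLittleO_fderiv {ψ : E → F} {ψ' : E → E →L[ℝ] F} {x : E}
    (hψ : ∀ᶠ y in 𝓝 x, HasFDerivAt ψ (ψ' y) y) (hψ' : ψ' =o[𝓝 x] fun y => y - x) :
    (fun y => ψ y - ψ x) =o[𝓝 x] fun y => ‖y - x‖ ^ 2 := by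
  refine isLittleO_iff.2 fun ε hε => ?_
  obtain ⟨δ, hδ, hball⟩ :=
    Metric.eventually_nhds_iff_ball.1 (hψ.and (isLittleO_iff.1 hψ' hε))
  filter_upwards [Metric.ball_mem_nhds x hδ] with y hy
  have hsub : Metric.closedBall x ‖y - x‖ ⊆ Metric.ball x δ :=
    Metric.closedBall_subset_ball (by rwa [← dist_eq_norm])
  have hmvt := (convex_closedBall x ‖y - x‖).norm_image_sub_le_of_norm_hasFDerivWithin_le
    (fun z hz => (hball z (hsub hz)).1.hasFDerivWithinAt)
    (fun z hz => (hball z (hsub hz)).2.trans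
      (mul_le_mul_of_nonneg_left (by rwa [← dist_eq_norm]) hε.le))
    (Metric.mem_closedBall_self (norm_nonneg _)) (by rw [Metric.mem_closedBall, dist_eq_norm])
  calc ‖ψ y - ψ x‖ ≤ ε * ‖y - x‖ * ‖y - x‖ := hmvt
    _ = ε * ‖‖y - x‖ ^ 2‖ := by rw [norm_pow, norm_norm]; ring

theorem taylor_isLittleO_sq {f' : E → E →L[ℝ] F} {f'' : E →L[ℝ] E →L[ℝ] F} {x : E}
    (hf : ∀ᶠ y in 𝓝 x, HasFDerivAt f (f' y) y) (hf' : HasFDerivAt f' f'' x) :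
    (fun y => f y - f x - f' x (y - x) - (2 : ℝ)⁻¹ • f'' (y - x) (y - x))
      =o[𝓝 x] fun y => ‖y - x‖ ^ 2 := by
  have hsymm := second_derivative_symmetric_of_eventually hf hf'
  have hquad : ∀ y, HasFDerivAt (fun z => f'' (z - x) (z - x)) ((2 : ℝ) • f'' (y - x)) y := by
    intro y
    have hsub := (hasFDerivAt_id (𝕜 := ℝ) y).sub_const x
    refine ((f''.hasFDerivAt.comp y hsub).clm_apply hsub).congr_fderiv ?_
    ext w
    simp [hsymm w, two_smul]
  have hψ : ∀ᶠ y in 𝓝 x, HasFDerivAt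
      (fun y => f y - f x - f' x (y - x) - (2 : ℝ)⁻¹ • f'' (y - x) (y - x))
      (f' y - f' x - f'' (y - x)) y := by
    filter_upwards [hf] with y hy
    have hlin := (f' x).hasFDerivAt.comp y ((hasFDerivAt_id (𝕜 := ℝ) y).sub_const x)
    refine (((hy.sub_const (f x)).sub hlin).sub ((hquad y).const_smul (2 : ℝ)⁻¹)).congr_fderiv ?_
    simp [smul_smul]
  simpa using isLittleO_sub_sq_of_isLittleO_fderiv hψ hf'.isLittleO

variable {L : E →L[ℝ] E}

theorem fderiv_eq_fderiv_comp_of_invariant (hinv : ∀ x, f (L x) = f x) {x : E}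
    (hx : DifferentiableAt ℝ f (L x)) : fderiv ℝ f x = (fderiv ℝ f (L x)).comp L := by
  calc fderiv ℝ f x = fderiv ℝ (f ∘ L) x := by rw [show f ∘ L = f from funext hinv]
    _ = (fderiv ℝ f (L x)).comp L := by rw [fderiv_comp x hx L.differentiableAt, L.fderiv]

theorem fderiv_fderiv_apply_apply_of_invariant (hinv : ∀ x, f (L x) = f x)
    (hf : ∀ᶠ x in 𝓝 0, DifferentiableAt ℝ f x) (hf' : DifferentiableAt ℝ (fderiv ℝ f) 0)
    (v w : E) : fderiv ℝ (fderiv ℝ f) 0 (L v) (L w) = fderiv ℝ (fderiv ℝ f) 0 v w := by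
  set Q := fderiv ℝ (fderiv ℝ f) 0
  have hL : Tendsto L (𝓝 0) (𝓝 0) := by simpa using L.continuous.tendsto 0
  have heq : fderiv ℝ f =ᶠ[𝓝 0] fun x => (fderiv ℝ f (L x)).comp L :=
    (hL.eventually hf).mono fun x hx => fderiv_eq_fderiv_comp_of_invariant hinv hx
  have hQ : HasFDerivAt (fderiv ℝ f) Q 0 := hf'.hasFDerivAt
  have hQL : HasFDerivAt (fun x => fderiv ℝ f (L x)) (Q.comp L) 0 :=
    (map_zero L ▸ hQ).comp 0 L.hasFDerivAt
  have hcomp := ((ContinuousLinearMap.compL ℝ E E F).flip L).hasFDerivAt.comp 0 hQL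
  have := hQ.unique (hcomp.congr_of_eventuallyEq heq)
  exact congr($this.symm v w)

theorem ContinuousLinearMap.eq_zero_of_comp_eq_self {φ : E →L[ℝ] F}
    (hL : ∀ x, x + L x + L (L x) = 0) (hφ : φ.comp L = φ) : φ = 0 := by
  ext v
  have h1 : φ (L v) = φ v := congr($hφ v)
  have h2 : φ (L (L v)) = φ v := congr($hφ (L v)).trans h1
  have h3 : (3 : ℝ) • φ v = 0 := by
    rw [← map_zero φ, ← hL v, map_add, map_add, h1, h2]
    module
  simpa using h3

theorem fderiv_zero_eq_zero_of_invariant (hL : ∀ x, x + L x + L (L x) = 0)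
    (hinv : ∀ x, f (L x) = f x) (hf : DifferentiableAt ℝ f 0) : fderiv ℝ f 0 = 0 := by
  have h := fderiv_eq_fderiv_comp_of_invariant hinv (x := 0) (by rwa [map_zero])
  rw [map_zero] at h
  exact ContinuousLinearMap.eq_zero_of_comp_eq_self hL h.symm

end Calculus

local notation "e₀" => EuclideanSpace.single (0 : Fin 2) (1 : ℝ)
local notation "e₁" => EuclideanSpace.single (1 : Fin 2) (1 : ℝ)

theorem rot_apply_zero (x : EuclideanSpace ℝ (Fin 2)) :
    rot x 0 = -1 / 2 * x 0 - Real.sqrt 3 / 2 * x 1 := rfl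

theorem rot_apply_one (x : EuclideanSpace ℝ (Fin 2)) :
    rot x 1 = Real.sqrt 3 / 2 * x 0 - 1 / 2 * x 1 := rfl

theorem EuclideanSpace.ext_fin_two {x y : EuclideanSpace ℝ (Fin 2)} (h₀ : x 0 = y 0)
    (h₁ : x 1 = y 1) : x = y := by
  ext i
  fin_cases i
  exacts [h₀, h₁]

noncomputable def rotCLM : EuclideanSpace ℝ (Fin 2) →L[ℝ] EuclideanSpace ℝ (Fin 2) :=
  LinearMap.toContinuousLinearMap
  { toFun := rot
    map_add' := fun x y => EuclideanSpace.ext_fin_two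
      (by simp only [rot_apply_zero, PiLp.add_apply]; ring)
      (by simp only [rot_apply_one, PiLp.add_apply]; ring)
    map_smul' := fun c x => EuclideanSpace.ext_fin_two
      (by simp only [rot_apply_zero, PiLp.smul_apply, smul_eq_mul, RingHom.id_apply]; ring)
      (by simp only [rot_apply_one, PiLp.smul_apply, smul_eq_mul, RingHom.id_apply]; ring) }

theorem add_rot_add_rot_rot (x : EuclideanSpace ℝ (Fin 2)) : x + rot x + rot (rot x) = 0 := by
  have h3 : Real.sqrt 3 * Real.sqrt 3 = 3 := Real.mul_self_sqrt (by norm_num)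
  refine EuclideanSpace.ext_fin_two ?_ ?_
  · simp only [rot_apply_zero, rot_apply_one, PiLp.add_apply, PiLp.zero_apply]
    linear_combination (-x 0 / 4) * h3
  · simp only [rot_apply_zero, rot_apply_one, PiLp.add_apply, PiLp.zero_apply]
    linear_combination (-x 1 / 4) * h3

theorem rot_single_zero : rot e₀ = (-1 / 2 : ℝ) • e₀ + (Real.sqrt 3 / 2) • e₁ :=
  EuclideanSpace.ext_fin_two (by norm_num [rot_apply_zero]) (by norm_num [rot_apply_one])

theorem rot_single_one : rot e₁ = (-Real.sqrt 3 / 2) • e₀ + (-1 / 2 : ℝ) • e₁ :=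
  EuclideanSpace.ext_fin_two (by simp [rot_apply_zero, neg_div]) (by norm_num [rot_apply_one])

theorem EuclideanSpace.eq_smul_single_add_smul_single (x : EuclideanSpace ℝ (Fin 2)) :
    x = x 0 • e₀ + x 1 • e₁ :=
  EuclideanSpace.ext_fin_two (by simp) (by simp)

theorem EuclideanSpace.norm_sq_fin_two (x : EuclideanSpace ℝ (Fin 2)) :
    ‖x‖ ^ 2 = x 0 ^ 2 + x 1 ^ 2 := by
  simp [EuclideanSpace.norm_sq_eq, Fin.sum_univ_two]

theorem apply_self_eq_of_rot_invariant
    (B : EuclideanSpace ℝ (Fin 2) →L[ℝ] EuclideanSpace ℝ (Fin 2) →L[ℝ] ℝ)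
    (hsymm : ∀ v w, B v w = B w v) (hinv : ∀ v w, B (rot v) (rot w) = B v w)
    (x : EuclideanSpace ℝ (Fin 2)) : B x x = B e₀ e₀ * ‖x‖ ^ 2 := by
  have h3 : Real.sqrt 3 ^ 2 = 3 := Real.sq_sqrt (by norm_num)
  have h00 := hinv e₀ e₀
  have h01 := hinv e₀ e₁
  simp only [rot_single_zero, rot_single_one, map_add, map_smul, add_apply, smul_apply,
    smul_eq_mul, hsymm e₁ e₀] at h00 h01
  have hdiag : B e₁ e₁ = B e₀ e₀ := by
    linear_combination h00 - (Real.sqrt 3 / 3) * h01 +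
      (B e₀ e₀ / 12 - B e₁ e₁ / 3 - Real.sqrt 3 * B e₀ e₁ / 12) * h3
  have hoff : B e₀ e₁ = 0 := by
    have : Real.sqrt 3 * B e₀ e₁ = 0 := by
      linear_combination -2 * h00 + (3 / 2 : ℝ) * hdiag + (B e₁ e₁ / 2) * h3
    exact (mul_eq_zero.1 this).resolve_left (by positivity)
  conv_lhs => rw [EuclideanSpace.eq_smul_single_add_smul_single x]
  simp only [map_add, map_smul, add_apply, smul_apply, smul_eq_mul, hsymm e₁ e₀, hoff, hdiag]
  rw [EuclideanSpace.norm_sq_fin_two]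
  ring

/-- A function invariant under rotation by `2π/3` which is twice differentiable at `0`
has vanishing derivative there and an isotropic quadratic Taylor term:
`f(x) = f(0) + a‖x‖² + o(‖x‖²)`. -/
theorem stmt6 (f : EuclideanSpace ℝ (Fin 2) → ℝ)
    (hf1 : ∀ᶠ x in nhds (0 : EuclideanSpace ℝ (Fin 2)), DifferentiableAt ℝ f x)
    (hf2 : DifferentiableAt ℝ (fderiv ℝ f) 0)
    (hinv : ∀ x, f (rot x) = f x) :
    fderiv ℝ f 0 = 0 ∧
    ∃ a : ℝ, (fun x : EuclideanSpace ℝ (Fin 2) => f x - f 0 - a * ‖x‖ ^ 2)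
      =o[nhds (0 : EuclideanSpace ℝ (Fin 2))] (fun x => ‖x‖ ^ 2) := by
  have hrot : ∀ x, f (rotCLM x) = f x := hinv
  have hf : ∀ᶠ x in 𝓝 0, HasFDerivAt f (fderiv ℝ f x) x := hf1.mono fun x hx => hx.hasFDerivAt
  have hD1 : fderiv ℝ f 0 = 0 :=
    fderiv_zero_eq_zero_of_invariant add_rot_add_rot_rot hrot hf1.self_of_nhds
  have htaylor := taylor_isLittleO_sq hf hf2.hasFDerivAt
  set Q := fderiv ℝ (fderiv ℝ f) 0
  have hQ : ∀ x, Q x x = Q e₀ e₀ * ‖x‖ ^ 2 :=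
    apply_self_eq_of_rot_invariant Q (second_derivative_symmetric_of_eventually hf hf2.hasFDerivAt)
      (fderiv_fderiv_apply_apply_of_invariant hrot hf1 hf2)
  refine ⟨hD1, Q e₀ e₀ / 2, ?_⟩
  simp only [sub_zero, hD1, zero_apply, smul_eq_mul] at htaylor
  refine htaylor.congr_left fun x => ?_
  rw [hQ]
  ring
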